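/- Let X be a Banach space, (Ω, μ) a σ-finite measure space, and N : Ω → B(X) such that t ↦ N(t)x is strongly μ-measurable for every x ∈ X and there is a constant C > 0 with ∫_Ω ‖N(t)x‖ dμ(t) ≤ C ‖x‖ for all x ∈ X. Then for every f ∈ L^∞(Ω, μ) the Bochner integral N_f x = ∫_Ω f(t) N(t)x dμ(t) defines a bounded linear operator N_f on X, and the set {N_f : f ∈ L^∞(Ω,μ), ‖f‖_{L^∞} ≤ 1} is R-bounded with constant at most 2C. -/

import Mathlib

open MeasureTheory

/-- The Rademacher average `2^(-n) ∑_{ε ∈ {-1,1}^n} ‖∑ i ε_i v_i‖`. -/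
noncomputable def radAvg {X : Type*} [NormedAddCommGroup X] (n : ℕ) (v : Fin n → X) : ℝ :=
  ((2 : ℝ) ^ n)⁻¹ * ∑ ε : Fin n → Bool, ‖∑ i, (if ε i then v i else -v i)‖

/-- `R`-boundedness of a set of operators with constant `C`. -/
def RBounded {X : Type*} [NormedAddCommGroup X] [NormedSpace ℂ X]
    (τ : Set (X →L[ℂ] X)) (C : ℝ) : Prop :=
  ∀ (n : ℕ) (T : Fin n → X →L[ℂ] X), (∀ i, T i ∈ τ) → ∀ x : Fin n → X,
    radAvg n (fun i => T i (x i)) ≤ C * radAvg n x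

/-!
Fix `t`. Kahane's contraction principle bounds the Rademacher average of `(f_i(t) N(t) x_i)_i`
by twice that of `(N(t) x_i)_i`: for real coefficients in `[-1, 1]` the average is convex in
each coefficient and invariant under flipping a sign, so it is largest at coefficient `1`; a
complex coefficient splits into real and imaginary part, which costs the factor `2`.
Integrating in `t`, the norm of an integral is at most the integral of the norm, and
`∫ ‖N(t) y‖ dμ ≤ C ‖y‖` for `y = ∑ ε_i x_i` gives the constant `2C`.
-/

open Finset

section SignedSum

variable {X : Type*} [NormedAddCommGroup X] {n : ℕ}

def signedSum (ε : Fin n → Bool) (v : Fin n → X) : X :=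
  ∑ i, if ε i then v i else -v i

lemma radAvg_eq_sum_signedSum (v : Fin n → X) :
    radAvg n v = ((2 : ℝ) ^ n)⁻¹ * ∑ ε, ‖signedSum ε v‖ := rfl

lemma map_signedSum {Y F : Type*} [NormedAddCommGroup Y] [FunLike F X Y] [AddMonoidHomClass F X Y]
    (L : F) (ε : Fin n → Bool) (v : Fin n → X) :
    L (signedSum ε v) = signedSum ε (fun i => L (v i)) := by
  simp only [signedSum, map_sum, apply_ite L, map_neg]

lemma signedSum_add (ε : Fin n → Bool) (v u : Fin n → X) :
    signedSum ε (fun i => v i + u i) = signedSum ε v + signedSum ε u := by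
  simp only [signedSum, ← sum_add_distrib]
  refine sum_congr rfl fun i _ => ?_
  split_ifs <;> abel

lemma radAvg_add_le (v u : Fin n → X) :
    radAvg n (fun i => v i + u i) ≤ radAvg n v + radAvg n u := by
  simp only [radAvg_eq_sum_signedSum, ← mul_add, ← sum_add_distrib, signedSum_add]
  gcongr with ε
  exact norm_add_le _ _

lemma signedSum_smul {𝕜 : Type*} [NormedField 𝕜] [NormedSpace 𝕜 X] (ε : Fin n → Bool) (c : 𝕜)
    (v : Fin n → X) : signedSum ε (fun i => c • v i) = c • signedSum ε v :=
  (map_signedSum (DistribSMul.toAddMonoidHom X c) ε v).symm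

lemma radAvg_smul {𝕜 : Type*} [NormedField 𝕜] [NormedSpace 𝕜 X] (c : 𝕜) (v : Fin n → X) :
    radAvg n (fun i => c • v i) = ‖c‖ * radAvg n v := by
  simp only [radAvg_eq_sum_signedSum, signedSum_smul, norm_smul, ← mul_sum]
  ring

lemma signedSum_update (ε : Fin n → Bool) (v : Fin n → X) (j : Fin n) (x : X) :
    signedSum ε (Function.update v j x) =
      (if ε j then x else -x) + ∑ i ∈ univ.erase j, if ε i then v i else -v i := by
  rw [signedSum, ← add_sum_erase _ _ (mem_univ j), Function.update_self]
  congr 1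
  refine sum_congr rfl fun i hi => ?_
  rw [Function.update_of_ne (ne_of_mem_erase hi)]

end SignedSum

section RealContraction

variable {X : Type*} [NormedAddCommGroup X] [NormedSpace ℝ X] {n : ℕ}

-- `s • b = ((1 + s) / 2) • b + ((1 - s) / 2) • (-b)`, and `-b` is the `j`-th term once `ε j` is
-- flipped.
lemma signedSum_update_smul (ε : Fin n → Bool) (v : Fin n → X) (j : Fin n) (s : ℝ) :
    signedSum ε (Function.update v j (s • v j)) =
      ((1 + s) / 2) • signedSum ε v +
        ((1 - s) / 2) • signedSum (Function.update ε j (!ε j)) v := by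
  have hv := signedSum_update ε v j (v j)
  have hflip := signedSum_update (Function.update ε j (!ε j)) v j (v j)
  rw [Function.update_eq_self] at hv hflip
  rw [signedSum_update, hv, hflip]
  have hrest : ∑ i ∈ univ.erase j, (if Function.update ε j (!ε j) i then v i else -v i) =
      ∑ i ∈ univ.erase j, if ε i then v i else -v i :=
    sum_congr rfl fun i hi => by rw [Function.update_of_ne (ne_of_mem_erase hi)]
  rw [hrest, Function.update_self]
  cases ε j <;> simp only [Bool.not_true, Bool.not_false, Bool.false_eq_true, if_true, if_false]
    <;> module

lemma sum_norm_signedSum_update_smul_le (v : Fin n → X) (j : Fin n) {s : ℝ} (hs : |s| ≤ 1) :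
    ∑ ε, ‖signedSum ε (Function.update v j (s • v j))‖ ≤ ∑ ε, ‖signedSum ε v‖ := by
  obtain ⟨hs₁, hs₂⟩ := abs_le.mp hs
  have hflip : Function.Involutive fun ε : Fin n → Bool => Function.update ε j (!ε j) := by
    intro ε
    simp only [Function.update_self, Bool.not_not, Function.update_idem, Function.update_eq_self]
  have hsum : ∑ ε, ‖signedSum (Function.update ε j (!ε j)) v‖ = ∑ ε, ‖signedSum ε v‖ :=
    Equiv.sum_comp (hflip.toPerm _) fun ε => ‖signedSum ε v‖
  calc ∑ ε, ‖signedSum ε (Function.update v j (s • v j))‖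
      ≤ ∑ ε, ((1 + s) / 2 * ‖signedSum ε v‖ +
          (1 - s) / 2 * ‖signedSum (Function.update ε j (!ε j)) v‖) := by
        gcongr with ε
        rw [signedSum_update_smul]
        refine (norm_add_le _ _).trans_eq ?_
        rw [norm_smul, norm_smul, Real.norm_of_nonneg (by linarith),
          Real.norm_of_nonneg (by linarith)]
    _ = ∑ ε, ‖signedSum ε v‖ := by
        rw [sum_add_distrib, ← mul_sum, ← mul_sum, hsum]
        ring

-- Kahane's contraction principle.
lemma radAvg_smul_le_of_abs_le_one (lam : Fin n → ℝ) (hlam : ∀ i, |lam i| ≤ 1) (v : Fin n → X) :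
    radAvg n (fun i => lam i • v i) ≤ radAvg n v := by
  suffices h : ∀ t : Finset (Fin n),
      ∑ ε, ‖signedSum ε (fun i => if i ∈ t then lam i • v i else v i)‖ ≤ ∑ ε, ‖signedSum ε v‖ by
    simpa only [radAvg_eq_sum_signedSum, mem_univ, if_true] using
      mul_le_mul_of_nonneg_left (h univ) (by positivity : (0 : ℝ) ≤ ((2 : ℝ) ^ n)⁻¹)
  intro t
  induction t using Finset.induction_on with
  | empty => simp only [notMem_empty, if_false, le_refl]
  | insert j t hj ih =>
    set u := fun i => if i ∈ t then lam i • v i else v i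
    have hu : (fun i => if i ∈ insert j t then lam i • v i else v i) =
        Function.update u j (lam j • u j) := by
      funext i
      by_cases hij : i = j
      · subst hij; simp [u, hj]
      · simp [u, hij]
    rw [hu]
    exact (sum_norm_signedSum_update_smul_le u j (hlam j)).trans ih

end RealContraction

section ComplexContraction

variable {X : Type*} [NormedAddCommGroup X] [NormedSpace ℂ X] {n : ℕ}

lemma smul_eq_re_smul_add_im_smul_I_smul (a : ℂ) (w : X) :
    a • w = a.re • w + a.im • (Complex.I • w) := by
  conv_lhs => rw [← Complex.re_add_im a]
  rw [add_smul, mul_smul, Complex.coe_smul, Complex.coe_smul]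

lemma radAvg_smul_le_two_mul (a : Fin n → ℂ) (ha : ∀ i, ‖a i‖ ≤ 1) (v : Fin n → X) :
    radAvg n (fun i => a i • v i) ≤ 2 * radAvg n v := by
  have hre : ∀ i, |(a i).re| ≤ 1 := fun i => (Complex.abs_re_le_norm _).trans (ha i)
  have him : ∀ i, |(a i).im| ≤ 1 := fun i => (Complex.abs_im_le_norm _).trans (ha i)
  calc radAvg n (fun i => a i • v i)
      = radAvg n (fun i => (a i).re • v i + (a i).im • (Complex.I • v i)) :=
        congrArg (radAvg n) (funext fun i => smul_eq_re_smul_add_im_smul_I_smul (a i) (v i))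
    _ ≤ radAvg n (fun i => (a i).re • v i) + radAvg n (fun i => (a i).im • (Complex.I • v i)) :=
        radAvg_add_le _ _
    _ ≤ radAvg n v + radAvg n (fun i => Complex.I • v i) :=
        add_le_add (radAvg_smul_le_of_abs_le_one _ hre v)
          (radAvg_smul_le_of_abs_le_one _ him fun i => Complex.I • v i)
    _ = 2 * radAvg n v := by rw [radAvg_smul, Complex.norm_I]; ring

end ComplexContraction

section Integral

variable {Ω : Type*} [MeasurableSpace Ω] {μ : Measure Ω}

lemma ae_norm_le_one_of_eLpNorm_top_le_one {G : Type*} [NormedAddCommGroup G] {f : Ω → G}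
    (hf : MemLp f ⊤ μ) (hf_le : eLpNorm f ⊤ μ ≤ 1) : ∀ᵐ t ∂μ, ‖f t‖ ≤ 1 := by
  filter_upwards [ae_le_lpNorm_exponent_top hf] with t ht
  refine ht.trans ?_
  rw [← toReal_eLpNorm hf.1]
  exact ENNReal.toReal_le_of_le_ofReal zero_le_one (ENNReal.ofReal_one ▸ hf_le)

section Rademacher

variable {X : Type*} [NormedAddCommGroup X] {n : ℕ} {g : Fin n → Ω → X}

lemma integrable_signedSum (hg : ∀ i, Integrable (g i) μ) (ε : Fin n → Bool) :
    Integrable (fun t => signedSum ε fun i => g i t) μ :=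
  integrable_finsetSum _ fun i _ => by cases ε i <;> simp [hg i]

lemma integrable_radAvg (hg : ∀ i, Integrable (g i) μ) :
    Integrable (fun t => radAvg n fun i => g i t) μ :=
  (integrable_finsetSum _ fun ε _ => (integrable_signedSum hg ε).norm).const_mul _

variable [NormedSpace ℝ X]

lemma integral_signedSum (hg : ∀ i, Integrable (g i) μ) (ε : Fin n → Bool) :
    ∫ t, signedSum ε (fun i => g i t) ∂μ = signedSum ε fun i => ∫ t, g i t ∂μ := by
  simp only [signedSum]
  rw [integral_finsetSum _ fun i _ => by cases ε i <;> simp [hg i]]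
  refine sum_congr rfl fun i _ => ?_
  cases ε i <;> simp [integral_neg]

lemma radAvg_integral_le (hg : ∀ i, Integrable (g i) μ) :
    radAvg n (fun i => ∫ t, g i t ∂μ) ≤ ∫ t, radAvg n (fun i => g i t) ∂μ := by
  simp only [radAvg_eq_sum_signedSum, integral_const_mul,
    integral_finsetSum _ fun ε _ => (integrable_signedSum hg ε).norm, ← integral_signedSum hg]
  gcongr with ε
  exact norm_integral_le_integral_norm _

end Rademacher

variable {E F : Type*} [NormedAddCommGroup E] [NormedSpace ℂ E]
  [NormedAddCommGroup F] [NormedSpace ℂ F] {N : Ω → E →L[ℂ] F} {C : ℝ}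

lemma integral_radAvg_apply_le (hN : ∀ x, Integrable (fun t => N t x) μ)
    (hNC : ∀ x, ∫ t, ‖N t x‖ ∂μ ≤ C * ‖x‖) {n : ℕ} (x : Fin n → E) :
    ∫ t, radAvg n (fun i => N t (x i)) ∂μ ≤ C * radAvg n x := by
  simp only [radAvg_eq_sum_signedSum, ← map_signedSum]
  rw [integral_const_mul, integral_finsetSum _ fun ε _ => (hN (signedSum ε x)).norm,
    mul_left_comm]
  refine mul_le_mul_of_nonneg_left ?_ (by positivity)
  rw [mul_sum]
  gcongr with ε
  exact hNC _

lemma norm_integral_smul_le {f : Ω → ℂ} (hf : MemLp f ⊤ μ) {g : Ω → F} (hg : Integrable g μ) :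
    ‖∫ t, f t • g t ∂μ‖ ≤ lpNorm f ⊤ μ * ∫ t, ‖g t‖ ∂μ := by
  rw [← integral_const_mul]
  refine norm_integral_le_of_norm_le (hg.norm.const_mul _) ?_
  filter_upwards [ae_le_lpNorm_exponent_top hf] with t ht
  rw [norm_smul]
  exact mul_le_mul_of_nonneg_right ht (norm_nonneg _)

lemma exists_clm_eq_integral_smul (hN : ∀ x, Integrable (fun t => N t x) μ)
    (hNC : ∀ x, ∫ t, ‖N t x‖ ∂μ ≤ C * ‖x‖) {f : Ω → ℂ} (hf : MemLp f ⊤ μ) :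
    ∃ T : E →L[ℂ] F, ∀ x, T x = ∫ t, f t • N t x ∂μ := by
  have hfN : ∀ x, Integrable (fun t => f t • N t x) μ := fun x => (hN x).smul_of_top_right hf
  let L : E →ₗ[ℂ] F :=
    { toFun := fun x => ∫ t, f t • N t x ∂μ
      map_add' := fun x y => by
        simp only [map_add, smul_add, integral_add (hfN x) (hfN y)]
      map_smul' := fun c x => by
        simp only [map_smul, smul_comm (f _) c, integral_smul, RingHom.id_apply] }
  refine ⟨L.mkContinuous (lpNorm f ⊤ μ * C) fun x => ?_, fun x => rfl⟩
  calc ‖∫ t, f t • N t x ∂μ‖ ≤ lpNorm f ⊤ μ * ∫ t, ‖N t x‖ ∂μ := norm_integral_smul_le hf (hN x)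
    _ ≤ lpNorm f ⊤ μ * (C * ‖x‖) := mul_le_mul_of_nonneg_left (hNC x) lpNorm_nonneg
    _ = lpNorm f ⊤ μ * C * ‖x‖ := (mul_assoc _ _ _).symm

end Integral

theorem stmt_14_general {X : Type*} [NormedAddCommGroup X] [NormedSpace ℂ X]
    {Ω : Type*} [MeasurableSpace Ω] (μ : Measure Ω)
    (N : Ω → X →L[ℂ] X)
    (hmeas : ∀ x : X, AEStronglyMeasurable (fun t => N t x) μ)
    (C : ℝ) (hC : 0 < C)
    (hint : ∀ x : X, ∫⁻ t, (‖N t x‖₊ : ENNReal) ∂μ ≤ ENNReal.ofReal (C * ‖x‖)) :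
    (∀ f : Ω → ℂ, MemLp f ⊤ μ →
      (∀ x : X, Integrable (fun t => f t • N t x) μ) ∧
      ∃ T : X →L[ℂ] X, ∀ x : X, T x = ∫ t, f t • N t x ∂μ) ∧
    RBounded {T : X →L[ℂ] X | ∃ f : Ω → ℂ, MemLp f ⊤ μ ∧ eLpNorm f ⊤ μ ≤ 1 ∧
      ∀ x : X, T x = ∫ t, f t • N t x ∂μ} (2 * C) := by
  have hN : ∀ x, Integrable (fun t => N t x) μ := fun x =>
    ⟨hmeas x, (hint x).trans_lt ENNReal.ofReal_lt_top⟩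
  have hNC : ∀ x, ∫ t, ‖N t x‖ ∂μ ≤ C * ‖x‖ := fun x => by
    rw [integral_norm_eq_lintegral_enorm (hmeas x)]
    exact ENNReal.toReal_le_of_le_ofReal (by positivity) (hint x)
  refine ⟨fun f hf => ⟨fun x => (hN x).smul_of_top_right hf,
    exists_clm_eq_integral_smul hN hNC hf⟩, fun n T hT x => ?_⟩
  choose f hf hf_le hTf using hT
  have hf_ae : ∀ᵐ t ∂μ, ∀ i, ‖f i t‖ ≤ 1 :=
    ae_all_iff.mpr fun i => ae_norm_le_one_of_eLpNorm_top_le_one (hf i) (hf_le i)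
  have hfN : ∀ i, Integrable (fun t => f i t • N t (x i)) μ := fun i =>
    (hN (x i)).smul_of_top_right (hf i)
  calc radAvg n (fun i => T i (x i))
      = radAvg n (fun i => ∫ t, f i t • N t (x i) ∂μ) := by simp only [hTf]
    _ ≤ ∫ t, radAvg n (fun i => f i t • N t (x i)) ∂μ := radAvg_integral_le hfN
    _ ≤ ∫ t, 2 * radAvg n (fun i => N t (x i)) ∂μ := by
        refine integral_mono_ae (integrable_radAvg hfN)
          ((integrable_radAvg fun i => hN (x i)).const_mul 2) ?_
        filter_upwards [hf_ae] with t ht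
        exact radAvg_smul_le_two_mul _ ht _
    _ = 2 * ∫ t, radAvg n (fun i => N t (x i)) ∂μ := integral_const_mul _ _
    _ ≤ 2 * (C * radAvg n x) := by gcongr; exact integral_radAvg_apply_le hN hNC x
    _ = 2 * C * radAvg n x := (mul_assoc _ _ _).symm

/-- If `N : Ω → B(X)` is strongly measurable and
`∫ ‖N(t)x‖ dμ(t) ≤ C‖x‖` for all `x`, then for every `f ∈ L^∞(Ω,μ)` the Bochner integral
`N_f x = ∫ f(t) N(t)x dμ(t)` defines a bounded operator, and `{N_f : ‖f‖_{L^∞} ≤ 1}` is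
`R`-bounded with constant at most `2C`. -/
theorem stmt_14 {X : Type*} [NormedAddCommGroup X] [NormedSpace ℂ X] [CompleteSpace X]
    {Ω : Type*} [MeasurableSpace Ω] (μ : Measure Ω) [SigmaFinite μ]
    (N : Ω → X →L[ℂ] X)
    (hmeas : ∀ x : X, AEStronglyMeasurable (fun t => N t x) μ)
    (C : ℝ) (hC : 0 < C)
    (hint : ∀ x : X, ∫⁻ t, (‖N t x‖₊ : ENNReal) ∂μ ≤ ENNReal.ofReal (C * ‖x‖)) :
    (∀ f : Ω → ℂ, MemLp f ⊤ μ →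
      (∀ x : X, Integrable (fun t => f t • N t x) μ) ∧
      ∃ T : X →L[ℂ] X, ∀ x : X, T x = ∫ t, f t • N t x ∂μ) ∧
    RBounded {T : X →L[ℂ] X | ∃ f : Ω → ℂ, MemLp f ⊤ μ ∧ eLpNorm f ⊤ μ ≤ 1 ∧
      ∀ x : X, T x = ∫ t, f t • N t x ∂μ} (2 * C) :=
  stmt_14_general μ N hmeas C hC hint
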